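/- arXiv:1511.05514 — 2 statements merged into one kernel-verified Lean document; each statement's English description precedes it below -/
import Mathlib

section
/- Let x* be a feasible solution of the s-t-path LP. Then there exist an integer ℓ ≥ 0 and sets {s} = U_0 ⊂ U_1 ⊂ ⋯ ⊂ U_{ℓ−1} ⊂ U_ℓ = V \ {t} such that the set of narrow cuts equals {δ(U_i) : i = 0, ..., ℓ}; in particular, the narrow cuts form a chain. -/
open Finset SimpleGraph

attribute [local instance 10] Classical.propDecidable

noncomputable section

namespace STT

variable {V : Type*} [Fintype V] [DecidableEq V]

/-- `δ(U)`: the set of edges of the complete graph on `V` with exactly one endpoint in `U`. -/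
def cutOf (U : Finset V) : Finset (Sym2 V) :=
  Finset.univ.filter fun e => ∃ u v : V, e = Sym2.mk u v ∧ u ∈ U ∧ v ∉ U

/-- `E[U]`: the set of edges with both endpoints in `U`. -/
def within (U : Finset V) : Finset (Sym2 V) :=
  Finset.univ.filter fun e => ¬e.IsDiag ∧ ∀ v ∈ e, v ∈ U

/-- `x(F) := ∑_{e ∈ F} x_e`. -/
def xval (x : Sym2 V → ℝ) (F : Finset (Sym2 V)) : ℝ := ∑ e ∈ F, x e

/-- characteristic vector `χ^S` of an edge set `S`. -/
def chi (S : Finset (Sym2 V)) : Sym2 V → ℝ := fun e => if e ∈ S then 1 else 0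

/-- `S` is the edge set of a spanning tree of the complete graph on `V`. -/
def IsSpanningTree (S : Finset (Sym2 V)) : Prop :=
  (∀ e ∈ S, ¬e.IsDiag) ∧
    (SimpleGraph.fromEdgeSet (↑S : Set (Sym2 V))).Connected ∧
    S.card = Fintype.card V - 1

/-- the induced subgraph `(V,S)[M]` is connected. -/
def InducedConn (S : Finset (Sym2 V)) (M : Finset V) : Prop :=
  (SimpleGraph.induce (↑M : Set V) (SimpleGraph.fromEdgeSet (↑S : Set (Sym2 V)))).Connected

/-- `x` is a feasible solution of the `s`-`t`-path LP. -/
def LPFeasible (s t : V) (x : Sym2 V → ℝ) : Prop :=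
  (∀ e : Sym2 V, ¬e.IsDiag → 0 ≤ x e) ∧
    (∀ e : Sym2 V, e.IsDiag → x e = 0) ∧
    (∀ U : Finset V, U.Nonempty → U ≠ Finset.univ → Even (U ∩ {s, t}).card →
      2 ≤ xval x (cutOf U)) ∧
    (∀ U : Finset V, U.Nonempty → U ≠ Finset.univ → ¬Even (U ∩ {s, t}).card →
      1 ≤ xval x (cutOf U)) ∧
    (∀ v : V, v ≠ s → v ≠ t → xval x (cutOf {v}) = 2) ∧
    xval x (cutOf {s}) = 1 ∧ xval x (cutOf {t}) = 1

/-- `C` is a narrow cut w.r.t. `x`. -/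
def IsNarrowCut (x : Sym2 V → ℝ) (C : Finset (Sym2 V)) : Prop :=
  ∃ U : Finset V, U.Nonempty ∧ U ≠ Finset.univ ∧ C = cutOf U ∧ xval x C < 2

/-- property (★) for `x` w.r.t. `x*` and `ε`. -/
def StarProp (s t : V) (xstar : Sym2 V → ℝ) (ε : ℝ) (x : Sym2 V → ℝ) : Prop :=
  xval x (cutOf {s}) = 1 ∧ xval x (cutOf {t}) = 1 ∧
    ∀ F : Finset (Sym2 V), xval xstar F - ε ≤ xval x F ∧ xval x F ≤ xval xstar F + ε

/-- `θ_i := ⌈r (2 − x*(C_i) − ε)⌉` where `C_i = δ(U_i)`. -/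
def theta (r : ℕ) (xstar : Sym2 V → ℝ) (ε : ℝ) (U : ℕ → Finset V) (i : ℕ) : ℤ :=
  ⌈(r : ℝ) * (2 - xval xstar (cutOf (U i)) - ε)⌉

/-- `c(x) = ∑_{e={u,v}∈E} c(u,v) x_e` (each unordered pair counted once). -/
def cost (c : V → V → ℝ) (x : Sym2 V → ℝ) : ℝ :=
  (∑ u : V, ∑ v : V, c u v * x (Sym2.mk u v)) / 2

/-- the finset of all narrow cuts. -/
def NarrowCuts (xstar : Sym2 V → ℝ) : Finset (Finset (Sym2 V)) :=
  Finset.univ.filter fun C => IsNarrowCut xstar C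

/-- degree of `v` in the edge set `S`. -/
def degIn (S : Finset (Sym2 V)) (v : V) : ℕ := (S.filter fun e => v ∈ e).card

/-- `T_S`: vertices whose degree in `S` has the wrong parity. -/
def wrongParity (s t : V) (S : Finset (Sym2 V)) : Finset V :=
  Finset.univ.filter fun v =>
    if v = s ∨ v = t then Even (degIn S v) else ¬Even (degIn S v)

/-- `P` is the edge set of the (unique) `a`-`b`-path in `S`. -/
def IsPathEdges (a b : V) (S P : Finset (Sym2 V)) : Prop :=
  ∃ w : (SimpleGraph.fromEdgeSet (↑S : Set (Sym2 V))).Walk a b,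
    w.IsPath ∧ P = w.edges.toFinset

/-- the parity-correction vector `z^S` (for the `s`-`t`-path edge set `IS ⊆ S`). -/
def zvec (xstar : Sym2 V → ℝ) (β ε γS : ℝ) (eC : Finset (Sym2 V) → Sym2 V)
    (S IS : Finset (Sym2 V)) : Sym2 V → ℝ := fun g =>
  (1 - 2 * β) * γS * chi IS g +
    ∑ C ∈ (NarrowCuts xstar).filter (fun C => Even (S ∩ C).card),
      max 0 (β * (2 - xval xstar C - ε) - (1 - 2 * β) * γS) * chi {eC C} g

/-- the vector `y^S`. -/
def yvec (xstar : Sym2 V → ℝ) (β ε γS : ℝ) (eC : Finset (Sym2 V) → Sym2 V)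
    (S IS : Finset (Sym2 V)) : Sym2 V → ℝ := fun g =>
  β * (1 + ε) * xstar g + (1 - 2 * β) * chi (S \ IS) g + zvec xstar β ε γS eC S IS g

/-- the benefit `b_{S,C}`. -/
def benefit (xstar : Sym2 V → ℝ) (β ε γS : ℝ) (S C : Finset (Sym2 V)) : ℝ :=
  if (S ∩ C).card = 1 then 1 - γS
  else if Even (S ∩ C).card then min (β * (2 - xval xstar C - ε) / (1 - 2 * β)) γS
  else 0

lemma mem_cutOf {U : Finset V} {u v : V} :
    Sym2.mk u v ∈ cutOf U ↔ (u ∈ U ∧ v ∉ U) ∨ (v ∈ U ∧ u ∉ U) := by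
  unfold cutOf
  simp only [Finset.mem_filter, Finset.mem_univ, true_and]
  constructor
  · rintro ⟨a, b, hab, ha, hb⟩
    rcases Sym2.eq_iff.1 hab with ⟨rfl, rfl⟩ | ⟨rfl, rfl⟩ <;> tauto
  · rintro (⟨h1, h2⟩ | ⟨h1, h2⟩)
    · exact ⟨u, v, rfl, h1, h2⟩
    · exact ⟨v, u, Sym2.eq_swap.symm, h1, h2⟩

lemma cutOf_compl (U : Finset V) : cutOf (Finset.univ \ U) = cutOf U := by
  ext e
  induction e using Sym2.ind with
  | _ u v =>
    simp only [mem_cutOf, Finset.mem_sdiff, Finset.mem_univ, true_and]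
    tauto

lemma xval_cutOf_eq (x : Sym2 V → ℝ) (U : Finset V) :
    xval x (cutOf U) = ∑ e : Sym2 V, if e ∈ cutOf U then x e else 0 := by
  rw [xval, ← Finset.sum_filter, Finset.filter_mem_eq_inter, Finset.univ_inter]

lemma posimodular (x : Sym2 V → ℝ) (hx0 : ∀ e : Sym2 V, ¬e.IsDiag → 0 ≤ x e)
    (A B : Finset V) :
    xval x (cutOf (A \ B)) + xval x (cutOf (B \ A)) ≤ xval x (cutOf A) + xval x (cutOf B) := by
  simp only [xval_cutOf_eq, ← Finset.sum_add_distrib]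
  apply Finset.sum_le_sum
  intro e _
  induction e using Sym2.ind with
  | _ u v =>
    by_cases huv : u = v
    · subst huv
      simp only [mem_cutOf]
      split_ifs <;> first | tauto | norm_num
    · have hx : 0 ≤ x (Sym2.mk u v) := hx0 _ (by simp [Sym2.mk_isDiag_iff, huv])
      by_cases h1 : u ∈ A <;> by_cases h2 : v ∈ A <;> by_cases h3 : u ∈ B <;>
        by_cases h4 : v ∈ B <;>
        simp [mem_cutOf, Finset.mem_sdiff, h1, h2, h3, h4] <;> linarith


theorem stmt3 {V : Type*} [Fintype V] [DecidableEq V]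
    (hV : 2 ≤ Fintype.card V) (s t : V) (hst : s ≠ t)
    (xstar : Sym2 V → ℝ) (hfeas : LPFeasible s t xstar)
 :
    ∃ (ℓ : ℕ) (U : ℕ → Finset V),
      U 0 = {s} ∧ U ℓ = Finset.univ \ {t} ∧
      (∀ i < ℓ, U i ⊂ U (i + 1)) ∧
      ∀ C : Finset (Sym2 V), IsNarrowCut xstar C ↔ ∃ i ≤ ℓ, C = cutOf (U i) := by
  obtain ⟨hx0, hdiag, heven, hodd, hdeg, hxs, hxt⟩ := hfeas
  -- the family of "standard" narrow-cut shores
  set S : Finset (Finset V) :=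
    Finset.univ.filter (fun U : Finset V => s ∈ U ∧ t ∉ U ∧ xval xstar (cutOf U) < 2)
    with hSdef
  have hmemS : ∀ {W : Finset V},
      W ∈ S ↔ s ∈ W ∧ t ∉ W ∧ xval xstar (cutOf W) < 2 := by
    intro W; simp [hSdef]
  have hsS : ({s} : Finset V) ∈ S := by
    rw [hmemS]
    refine ⟨Finset.mem_singleton_self s, by simp [hst.symm], by rw [hxs]; norm_num⟩
  have htS : (Finset.univ \ {t} : Finset V) ∈ S := by
    rw [hmemS]
    refine ⟨by simp [hst], by simp, ?_⟩
    rw [cutOf_compl, hxt]; norm_num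
  -- every element of S lies between {s} and univ \ {t}
  have hlow : ∀ A ∈ S, ({s} : Finset V) ⊆ A := by
    intro A hA; exact Finset.singleton_subset_iff.2 (hmemS.1 hA).1
  have hhigh : ∀ A ∈ S, A ⊆ Finset.univ \ {t} := by
    intro A hA w hw
    simp only [Finset.mem_sdiff, Finset.mem_univ, Finset.mem_singleton, true_and]
    rintro rfl; exact (hmemS.1 hA).2.1 hw
  -- Even cardinality helper
  have hinterempty : ∀ (W : Finset V), s ∉ W → t ∉ W → Even ((W ∩ {s, t}).card) := by
    intro W hs ht
    have : W ∩ {s, t} = ∅ := by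
      ext w
      simp only [Finset.mem_inter, Finset.mem_insert, Finset.mem_singleton,
        Finset.notMem_empty, iff_false, not_and]
      rintro hw (rfl | rfl) <;> tauto
    rw [this]; simp
  have hinterfull : ∀ (W : Finset V), s ∈ W → t ∈ W → Even ((W ∩ {s, t}).card) := by
    intro W hs ht
    have : W ∩ {s, t} = {s, t} := by
      apply Finset.inter_eq_right.2
      intro w hw
      simp only [Finset.mem_insert, Finset.mem_singleton] at hw
      rcases hw with rfl | rfl <;> assumption
    rw [this, Finset.card_pair hst]
    decide
  -- S is a chain
  have hchain : ∀ A ∈ S, ∀ B ∈ S, A ⊆ B ∨ B ⊆ A := by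
    intro A hA B hB
    by_contra hcon
    push_neg at hcon
    obtain ⟨hAB, hBA⟩ := hcon
    obtain ⟨u, huA, huB⟩ := Finset.not_subset.1 hAB
    obtain ⟨v, hvB, hvA⟩ := Finset.not_subset.1 hBA
    obtain ⟨hsA, htA, hxA⟩ := hmemS.1 hA
    obtain ⟨hsB, htB, hxB⟩ := hmemS.1 hB
    have h1 : 2 ≤ xval xstar (cutOf (A \ B)) := by
      apply heven _ ⟨u, Finset.mem_sdiff.2 ⟨huA, huB⟩⟩
      · intro h
        have : s ∈ A \ B := h ▸ Finset.mem_univ s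
        exact (Finset.mem_sdiff.1 this).2 hsB
      · exact hinterempty _ (fun h => (Finset.mem_sdiff.1 h).2 hsB)
          (fun h => htA (Finset.mem_sdiff.1 h).1)
    have h2 : 2 ≤ xval xstar (cutOf (B \ A)) := by
      apply heven _ ⟨v, Finset.mem_sdiff.2 ⟨hvB, hvA⟩⟩
      · intro h
        have : s ∈ B \ A := h ▸ Finset.mem_univ s
        exact (Finset.mem_sdiff.1 this).2 hsA
      · exact hinterempty _ (fun h => (Finset.mem_sdiff.1 h).2 hsA)
          (fun h => htB (Finset.mem_sdiff.1 h).1)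
    have := posimodular xstar hx0 A B
    linarith
  -- card is injective on S
  have hinj : Set.InjOn Finset.card (↑S : Set (Finset V)) := by
    intro A hA B hB hcard
    rcases hchain A hA B hB with h | h
    · exact Finset.eq_of_subset_of_card_le h (le_of_eq hcard.symm)
    · exact (Finset.eq_of_subset_of_card_le h (le_of_eq hcard)).symm
  set T : Finset ℕ := S.image Finset.card with hTdef
  have hTpos : 0 < T.card :=
    Finset.card_pos.2 ⟨Finset.card {s}, Finset.mem_image_of_mem _ hsS⟩
  set iso := T.orderIsoOfFin rfl with hiso
  have hg : ∀ i : Fin T.card, ∃ A, A ∈ S ∧ A.card = ((iso i : ℕ)) := by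
    intro i
    obtain ⟨A, hA, hAc⟩ := Finset.mem_image.1 (iso i).2
    exact ⟨A, hA, hAc⟩
  choose g hgS hgc using hg
  have hgmono : ∀ i j : Fin T.card, i < j → g i ⊂ g j := by
    intro i j hij
    have hc : (g i).card < (g j).card := by
      rw [hgc, hgc]
      exact iso.strictMono hij
    rcases hchain _ (hgS i) _ (hgS j) with h | h
    · exact Finset.ssubset_iff_subset_ne.2 ⟨h, fun he => by rw [he] at hc; omega⟩
    · exact absurd (Finset.card_le_card h) (by omega)
  have hgsurj : ∀ A ∈ S, ∃ i : Fin T.card, g i = A := by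
    intro A hA
    have hmem : A.card ∈ T := Finset.mem_image_of_mem _ hA
    obtain ⟨i, hi⟩ := iso.surjective ⟨A.card, hmem⟩
    refine ⟨i, hinj (hgS i) hA ?_⟩
    rw [hgc i, hi]
  -- the enumeration
  refine ⟨T.card - 1, fun i => if h : i < T.card then g ⟨i, h⟩ else ∅, ?_, ?_, ?_, ?_⟩
  · -- U 0 = {s}
    beta_reduce
    rw [dif_pos hTpos]
    obtain ⟨i, hi⟩ := hgsurj _ hsS
    rcases eq_or_lt_of_le (show (⟨0, hTpos⟩ : Fin T.card) ≤ i from Nat.zero_le _) with h | h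
    · rw [← h] at hi; exact hi
    · exfalso
      have hss := hgmono _ _ h
      rw [hi] at hss
      exact (Finset.ssubset_iff_subset_ne.1
        (hss.trans_subset (hlow _ (hgS ⟨0, hTpos⟩)))).2 rfl
  · -- U ℓ = univ \ {t}
    have hl : T.card - 1 < T.card := by omega
    beta_reduce
    rw [dif_pos hl]
    obtain ⟨i, hi⟩ := hgsurj _ htS
    rcases eq_or_lt_of_le (show i ≤ (⟨T.card - 1, hl⟩ : Fin T.card) from by
        have := i.isLt; exact Nat.le_sub_one_of_lt this) with h | h
    · rw [← h, hi]
    · exfalso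
      have hss := hgmono _ _ h
      rw [hi] at hss
      exact (Finset.ssubset_iff_subset_ne.1
        ((hhigh _ (hgS ⟨T.card - 1, hl⟩)).trans_ssubset hss)).2 rfl
  · -- strict monotonicity
    intro i hi
    have h1 : i < T.card := by omega
    have h2 : i + 1 < T.card := by omega
    beta_reduce
    rw [dif_pos h1, dif_pos h2]
    exact hgmono ⟨i, h1⟩ ⟨i + 1, h2⟩ (by simp [Fin.lt_def])
  · -- characterization of narrow cuts
    intro C
    constructor
    · rintro ⟨W, hWne, hWuniv, rfl, hlt⟩
      -- normalize W to an element of S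
      have hW' : ∃ W' ∈ S, cutOf W' = cutOf W := by
        by_cases hsW : s ∈ W <;> by_cases htW : t ∈ W
        · exact absurd (heven W hWne hWuniv (hinterfull W hsW htW)) (by linarith)
        · exact ⟨W, hmemS.2 ⟨hsW, htW, hlt⟩, rfl⟩
        · refine ⟨Finset.univ \ W, hmemS.2 ⟨?_, ?_, ?_⟩, cutOf_compl W⟩
          · exact Finset.mem_sdiff.2 ⟨Finset.mem_univ s, hsW⟩
          · intro h; exact (Finset.mem_sdiff.1 h).2 htW
          · rw [cutOf_compl]; exact hlt
        · exact absurd (heven W hWne hWuniv (hinterempty W hsW htW)) (by linarith)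
      obtain ⟨W', hW'S, hW'cut⟩ := hW'
      obtain ⟨i, hi⟩ := hgsurj _ hW'S
      refine ⟨i.1, Nat.le_sub_one_of_lt i.isLt, ?_⟩
      beta_reduce
      rw [dif_pos i.isLt]
      have : (⟨i.1, i.isLt⟩ : Fin T.card) = i := rfl
      rw [this, hi, hW'cut]
    · rintro ⟨i, hil, rfl⟩
      have hi : i < T.card := by omega
      beta_reduce
      rw [dif_pos hi]
      obtain ⟨hsg, htg, hxg⟩ := hmemS.1 (hgS ⟨i, hi⟩)
      exact ⟨g ⟨i, hi⟩, ⟨s, hsg⟩, fun h => htg (h ▸ Finset.mem_univ t), rfl, hxg⟩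

end STT

end
end

section
/- Let S_1, ..., S_r ∈ 𝒮 and ε ≥ 0 be such that x := (1/r) Σ_{j'=1}^r χ^{S_{j'}} satisfies property (★). Let 1 ≤ i ≤ ℓ − 1 and j ≤ θ_i be such that the induced subgraph (V, S_j)[U_i] is connected and |S_j ∩ C_h| = 1 for all h < i with j ≤ θ_h. Then there exist Ŝ_1, ..., Ŝ_r ∈ 𝒮 such that x = (1/r) Σ_{j'=1}^r χ^{Ŝ_{j'}}, Ŝ_{j'} = S_{j'} for all j' < j, and |Ŝ_j ∩ C_h| = 1 for all h ≤ i with j ≤ θ_h. -/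
open Finset SimpleGraph

attribute [local instance 10] Classical.propDecidable

noncomputable section

set_option linter.unusedSectionVars false
set_option maxHeartbeats 1600000

namespace STT

variable {V : Type*} [Fintype V] [DecidableEq V]

lemma mem_cutOf_mk {U : Finset V} {a b : V} :
    s(a, b) ∈ cutOf U ↔ ((a ∈ U ∧ b ∉ U) ∨ (b ∈ U ∧ a ∉ U)) := by
  unfold cutOf
  simp only [Finset.mem_filter, Finset.mem_univ, true_and]
  constructor
  · rintro ⟨u, v, huv, hu, hv⟩
    rw [Sym2.eq_iff] at huv
    rcases huv with ⟨rfl, rfl⟩ | ⟨rfl, rfl⟩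
    · exact Or.inl ⟨hu, hv⟩
    · exact Or.inr ⟨hu, hv⟩
  · rintro (⟨h1, h2⟩ | ⟨h1, h2⟩)
    · exact ⟨a, b, rfl, h1, h2⟩
    · exact ⟨b, a, Sym2.eq_swap.symm, h1, h2⟩

lemma cutOf_decomp {U : Finset V} {e : Sym2 V} (h : e ∈ cutOf U) :
    ∃ a b : V, e = s(a, b) ∧ a ∈ U ∧ b ∉ U := by
  unfold cutOf at h
  simpa using h

lemma reach_transfer {G G' : SimpleGraph V}
    (h : ∀ ⦃a b : V⦄, G.Adj a b → G'.Reachable a b) :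
    ∀ {x y : V}, G.Reachable x y → G'.Reachable x y := by
  intro x y hxy
  obtain ⟨w⟩ := hxy
  induction w with
  | nil => exact Reachable.refl _
  | cons ha _ ih => exact (h ha).trans ih

lemma reach_closure {G : SimpleGraph V} {P : V → Prop}
    (h : ∀ ⦃a b : V⦄, G.Adj a b → P a → P b) :
    ∀ {x y : V}, G.Reachable x y → P x → P y := by
  intro x y hxy
  obtain ⟨w⟩ := hxy
  induction w with
  | nil => exact id
  | cons ha _ ih => exact fun hx => ih (h ha hx)

lemma connected_transfer {G G' : SimpleGraph V} (hG : G.Connected)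
    (h : ∀ ⦃a b : V⦄, G.Adj a b → G'.Reachable a b) : G'.Connected := by
  rw [SimpleGraph.connected_iff]
  exact ⟨fun x y => reach_transfer h (hG.preconnected x y), hG.nonempty⟩

lemma crossing_aux {G : SimpleGraph V} {P : V → Prop} {b : V} :
    ∀ {a : V} (w : G.Walk a b), w.IsPath → ¬ P a → P b →
      ∃ p q : V, ¬ P p ∧ P q ∧ G.Adj p q ∧ s(p, q) ∈ w.edges ∧
        (G.deleteEdges {s(p, q)}).Reachable a p ∧
        (G.deleteEdges {s(p, q)}).Reachable q b := by
  intro a w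
  induction w with
  | nil => intro _ ha hb; exact absurd hb ha
  | @cons u v c huv w ih =>
    intro hw ha hb
    rw [SimpleGraph.Walk.cons_isPath_iff] at hw
    by_cases hv : P v
    · refine ⟨u, v, ha, hv, huv, by simp, Reachable.refl _, ?_⟩
      refine ⟨w.toDeleteEdges _ ?_⟩
      intro e he
      simp only [Set.mem_singleton_iff]
      rintro rfl
      exact hw.2 (SimpleGraph.Walk.fst_mem_support_of_mem_edges w he)
    · obtain ⟨p, q, hp, hq, hpq, hmem, r1, r2⟩ := ih hw.1 hv hb
      have hne : s(u, v) ≠ s(p, q) := by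
        intro h
        apply hw.2
        apply SimpleGraph.Walk.fst_mem_support_of_mem_edges w
        rw [h]; exact hmem
      refine ⟨p, q, hp, hq, hpq, by simp [hmem], ?_, r2⟩
      have hadj : (G.deleteEdges {s(p, q)}).Adj u v := by
        rw [SimpleGraph.deleteEdges_adj]
        exact ⟨huv, by simpa using hne⟩
      exact hadj.reachable.trans r1

lemma crossing {G : SimpleGraph V} {P : V → Prop} {a b : V}
    (hr : G.Reachable a b) (ha : ¬ P a) (hb : P b) :
    ∃ p q : V, ¬ P p ∧ P q ∧ G.Adj p q ∧
      (G.deleteEdges {s(p, q)}).Reachable a p ∧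
      (G.deleteEdges {s(p, q)}).Reachable q b := by
  obtain ⟨w⟩ := hr
  obtain ⟨p, q, h1, h2, h3, _, h5, h6⟩ := crossing_aux w.bypass w.bypass_isPath ha hb
  exact ⟨p, q, h1, h2, h3, h5, h6⟩

lemma fromEdgeSet_erase_eq (S : Finset (Sym2 V)) (e : Sym2 V) :
    SimpleGraph.fromEdgeSet (↑(S.erase e) : Set (Sym2 V)) =
      (SimpleGraph.fromEdgeSet (↑S : Set (Sym2 V))).deleteEdges {e} := by
  ext a b
  simp only [SimpleGraph.fromEdgeSet_adj, SimpleGraph.deleteEdges_adj, Finset.coe_erase,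
    Set.mem_diff, Set.mem_singleton_iff, Finset.mem_coe]
  tauto


lemma card_lb : ∀ (S : Finset (Sym2 V)), (∀ e ∈ S, ¬ e.IsDiag) →
    (SimpleGraph.fromEdgeSet (↑S : Set (Sym2 V))).Connected →
    Fintype.card V ≤ S.card + 1 := by
  intro S
  induction S using Finset.strongInduction with
  | _ S ih =>
    intro hdiag hconn
    by_cases hbr : ∀ e ∈ S, (SimpleGraph.fromEdgeSet (↑S : Set (Sym2 V))).IsBridge e
    · haveI : Fintype ((SimpleGraph.fromEdgeSet (↑S : Set (Sym2 V))).edgeSet) :=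
        Set.Finite.fintype (Set.toFinite _)
      have htree : (SimpleGraph.fromEdgeSet (↑S : Set (Sym2 V))).IsTree := by
        refine ⟨hconn, SimpleGraph.isAcyclic_iff_forall_edge_isBridge.2 ?_⟩
        intro e he
        rw [SimpleGraph.edgeSet_fromEdgeSet] at he
        exact hbr e he.1
      have hcard := htree.card_edgeFinset
      have hsub : (SimpleGraph.fromEdgeSet (↑S : Set (Sym2 V))).edgeFinset ⊆ S := by
        intro e he
        rw [SimpleGraph.mem_edgeFinset, SimpleGraph.edgeSet_fromEdgeSet] at he
        exact he.1
      have := Finset.card_le_card hsub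
      omega
    · push_neg at hbr
      obtain ⟨e, heS, hnbr⟩ := hbr
      revert heS hnbr
      induction e using Sym2.ind with
      | _ a b =>
        intro heS hnbr
        have hab : a ≠ b := fun h => (hdiag _ heS) (Sym2.mk_isDiag_iff.2 h)
        have hadj : (SimpleGraph.fromEdgeSet (↑S : Set (Sym2 V))).Adj a b :=
          (SimpleGraph.fromEdgeSet_adj _).2 ⟨heS, hab⟩
        rw [SimpleGraph.isBridge_iff] at hnbr
        push_neg at hnbr
        have hreach0 := hnbr
        have hreach : (SimpleGraph.fromEdgeSet (↑(S.erase s(a, b)) : Set (Sym2 V))).Reachable a b := by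
          rw [fromEdgeSet_erase_eq]
          exact hreach0
        have hconn' : (SimpleGraph.fromEdgeSet (↑(S.erase s(a, b)) : Set (Sym2 V))).Connected := by
          apply connected_transfer hconn
          intro x y hxy
          rw [SimpleGraph.fromEdgeSet_adj] at hxy
          by_cases hxe : s(x, y) = s(a, b)
          · rw [Sym2.eq_iff] at hxe
            rcases hxe with ⟨rfl, rfl⟩ | ⟨rfl, rfl⟩
            · exact hreach
            · exact hreach.symm
          · refine SimpleGraph.Adj.reachable ?_
            rw [SimpleGraph.fromEdgeSet_adj]
            exact ⟨Finset.mem_coe.2 (Finset.mem_erase.2 ⟨hxe, hxy.1⟩), hxy.2⟩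
        have := ih (S.erase s(a, b)) (Finset.erase_ssubset heS)
          (fun g hg => hdiag g (Finset.mem_of_mem_erase hg)) hconn'
        have hpos : 1 ≤ S.card := Finset.card_pos.2 ⟨_, heS⟩
        rw [Finset.card_erase_of_mem heS] at this
        omega

lemma tree_not_reach_erase (hV : 2 ≤ Fintype.card V) {S : Finset (Sym2 V)}
    (hT : IsSpanningTree S) {a b : V} (he : s(a, b) ∈ S) :
    ¬ (SimpleGraph.fromEdgeSet (↑(S.erase s(a, b)) : Set (Sym2 V))).Reachable a b := by
  intro hr
  have hconn' : (SimpleGraph.fromEdgeSet (↑(S.erase s(a, b)) : Set (Sym2 V))).Connected := by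
    apply connected_transfer hT.2.1
    intro x y hxy
    rw [SimpleGraph.fromEdgeSet_adj] at hxy
    by_cases hxe : s(x, y) = s(a, b)
    · rw [Sym2.eq_iff] at hxe
      rcases hxe with ⟨rfl, rfl⟩ | ⟨rfl, rfl⟩
      · exact hr
      · exact hr.symm
    · refine SimpleGraph.Adj.reachable ?_
      rw [SimpleGraph.fromEdgeSet_adj]
      exact ⟨Finset.mem_coe.2 (Finset.mem_erase.2 ⟨hxe, hxy.1⟩), hxy.2⟩
  have hlb := card_lb (S.erase s(a, b))
    (fun g hg => hT.1 g (Finset.mem_of_mem_erase hg)) hconn'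
  have hpos : 1 ≤ S.card := Finset.card_pos.2 ⟨_, he⟩
  rw [Finset.card_erase_of_mem he] at hlb
  have := hT.2.2
  omega

lemma tree_cross {S : Finset (Sym2 V)} (hT : IsSpanningTree S) {U : Finset V}
    (h1 : U.Nonempty) (h2 : U ≠ Finset.univ) : (S ∩ cutOf U).Nonempty := by
  obtain ⟨u, hu⟩ := h1
  have hv : ∃ v, v ∉ U := by
    by_contra h
    push_neg at h
    exact h2 (Finset.eq_univ_iff_forall.2 h)
  obtain ⟨v, hv⟩ := hv
  obtain ⟨p, q, hp, hq, hadj, -, -⟩ :=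
    crossing (P := fun x => x ∉ U) (hT.2.1.preconnected u v) (not_not_intro hu) hv
  rw [SimpleGraph.fromEdgeSet_adj] at hadj
  exact ⟨s(p, q), Finset.mem_inter.2 ⟨Finset.mem_coe.1 hadj.1,
    mem_cutOf_mk.2 (Or.inl ⟨not_not.1 hp, hq⟩)⟩⟩

lemma chi_sum (T F : Finset (Sym2 V)) : ∑ e ∈ F, chi T e = ((T ∩ F).card : ℝ) := by
  unfold chi
  rw [Finset.sum_boole, Finset.filter_mem_eq_inter, Finset.inter_comm]

lemma inner_reach {S : Finset (Sym2 V)} {Ui : Finset V} (hconn : InducedConn S Ui)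
    {a b : V} (ha : a ∈ Ui) (hb : b ∈ Ui) :
    (SimpleGraph.fromEdgeSet (↑(S.filter (fun g => ∀ v ∈ g, v ∈ Ui)) : Set (Sym2 V))).Reachable a b := by
  have hr := hconn.preconnected ⟨a, by simpa using ha⟩ ⟨b, by simpa using hb⟩
  have := Reachable.map
    (G := SimpleGraph.induce (↑Ui : Set V) (SimpleGraph.fromEdgeSet (↑S : Set (Sym2 V))))
    (G' := SimpleGraph.fromEdgeSet (↑(S.filter (fun g => ∀ v ∈ g, v ∈ Ui)) : Set (Sym2 V)))
    ⟨Subtype.val, ?_⟩ hr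
  · exact this
  · intro x y hxy
    have hadj : (SimpleGraph.fromEdgeSet (↑S : Set (Sym2 V))).Adj ↑x ↑y := hxy
    rw [SimpleGraph.fromEdgeSet_adj] at hadj ⊢
    refine ⟨Finset.mem_coe.2 (Finset.mem_filter.2 ⟨Finset.mem_coe.1 hadj.1, ?_⟩), hadj.2⟩
    intro v hv
    rcases Sym2.mem_iff.1 hv with rfl | rfl
    · exact Finset.mem_coe.1 x.2
    · exact Finset.mem_coe.1 y.2

lemma inducedConn_congr {S S' : Finset (Sym2 V)} {Ui : Finset V}
    (h : ∀ a b : V, a ∈ Ui → b ∈ Ui → (s(a, b) ∈ S' ↔ s(a, b) ∈ S))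
    (hc : InducedConn S Ui) : InducedConn S' Ui := by
  unfold InducedConn at *
  have heq : SimpleGraph.induce (↑Ui : Set V) (SimpleGraph.fromEdgeSet (↑S' : Set (Sym2 V))) =
      SimpleGraph.induce (↑Ui : Set V) (SimpleGraph.fromEdgeSet (↑S : Set (Sym2 V))) := by
    ext x y
    show (SimpleGraph.fromEdgeSet (↑S' : Set (Sym2 V))).Adj ↑x ↑y ↔
      (SimpleGraph.fromEdgeSet (↑S : Set (Sym2 V))).Adj ↑x ↑y
    rw [SimpleGraph.fromEdgeSet_adj, SimpleGraph.fromEdgeSet_adj]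
    have := h ↑x ↑y (Finset.mem_coe.1 x.2) (Finset.mem_coe.1 y.2)
    simp only [Finset.mem_coe]
    tauto
  rw [heq]
  exact hc


lemma LB_lemma {S1 : Finset (Sym2 V)} {Ui : Finset V} {s u' w' : V}
    (hS1conn : (SimpleGraph.fromEdgeSet (↑S1 : Set (Sym2 V))).Connected)
    (hconn : InducedConn S1 Ui) (hs : s ∈ Ui)
    (hu' : u' ∈ Ui) (hw' : w' ∉ Ui) {x : V}
    (hx : ¬ (SimpleGraph.fromEdgeSet (↑(S1.erase s(u', w')) : Set (Sym2 V))).Reachable s x) :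
    (SimpleGraph.fromEdgeSet
      (↑(S1.filter (fun g => ∀ v ∈ g, v ∉ Ui)) : Set (Sym2 V))).Reachable w' x := by
  have hinner : ∀ {y : V}, y ∈ Ui →
      (SimpleGraph.fromEdgeSet (↑(S1.erase s(u', w')) : Set (Sym2 V))).Reachable s y := by
    intro y hy
    refine (inner_reach hconn hs hy).mono (SimpleGraph.fromEdgeSet_mono ?_)
    refine Finset.coe_subset.2 ?_
    intro g hg
    rw [Finset.mem_filter] at hg
    refine Finset.mem_erase.2 ⟨?_, hg.1⟩
    intro hge
    exact hw' (hg.2 w' (hge ▸ Sym2.mem_mk_right u' w'))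
  have key : ∀ {y : V}, (SimpleGraph.fromEdgeSet (↑S1 : Set (Sym2 V))).Reachable s y →
      ((SimpleGraph.fromEdgeSet (↑(S1.erase s(u', w')) : Set (Sym2 V))).Reachable s y ∨
       (SimpleGraph.fromEdgeSet
         (↑(S1.filter (fun g => ∀ v ∈ g, v ∉ Ui)) : Set (Sym2 V))).Reachable w' y) := by
    intro y hy
    refine reach_closure
      (P := fun z => (SimpleGraph.fromEdgeSet (↑(S1.erase s(u', w')) : Set (Sym2 V))).Reachable s z ∨
        (SimpleGraph.fromEdgeSet
          (↑(S1.filter (fun g => ∀ v ∈ g, v ∉ Ui)) : Set (Sym2 V))).Reachable w' z)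
      ?_ hy (Or.inl (Reachable.refl s))
    intro a b hab hQa
    rw [SimpleGraph.fromEdgeSet_adj] at hab
    by_cases hbU : b ∈ Ui
    · exact Or.inl (hinner hbU)
    · by_cases haU : a ∈ Ui
      · by_cases heq : s(a, b) = s(u', w')
        · rw [Sym2.eq_iff] at heq
          rcases heq with ⟨rfl, rfl⟩ | ⟨rfl, rfl⟩
          · exact Or.inr (Reachable.refl _)
          · exact absurd haU hw'
        · refine Or.inl ((hinner haU).trans (SimpleGraph.Adj.reachable ?_))
          exact (SimpleGraph.fromEdgeSet_adj _).2
            ⟨Finset.mem_coe.2 (Finset.mem_erase.2 ⟨heq, Finset.mem_coe.1 hab.1⟩), hab.2⟩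
      · have hout : s(a, b) ∈ S1.filter (fun g => ∀ v ∈ g, v ∉ Ui) := by
          refine Finset.mem_filter.2 ⟨Finset.mem_coe.1 hab.1, ?_⟩
          intro v hv
          rcases Sym2.mem_iff.1 hv with rfl | rfl
          · exact haU
          · exact hbU
        rcases hQa with hQ | hQ
        · have hne : s(a, b) ≠ s(u', w') := by
            intro h
            rw [Sym2.eq_iff] at h
            rcases h with ⟨rfl, rfl⟩ | ⟨rfl, rfl⟩
            · exact haU hu'
            · exact hbU hu'
          refine Or.inl (hQ.trans (SimpleGraph.Adj.reachable ?_))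
          exact (SimpleGraph.fromEdgeSet_adj _).2
            ⟨Finset.mem_coe.2 (Finset.mem_erase.2 ⟨hne, Finset.mem_coe.1 hab.1⟩), hab.2⟩
        · refine Or.inr (hQ.trans (SimpleGraph.Adj.reachable ?_))
          exact (SimpleGraph.fromEdgeSet_adj _).2 ⟨Finset.mem_coe.2 hout, hab.2⟩
  rcases key (hS1conn.preconnected s x) with h | h
  · exact absurd h hx
  · exact h

lemma step (hV : 2 ≤ Fintype.card V) {s : V} {Ui : Finset V} (hsUi : s ∈ Ui)
    {S1 T2 : Finset (Sym2 V)} (hS1 : IsSpanningTree S1) (hT2 : IsSpanningTree T2)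
    (hconn : InducedConn S1 Ui)
    (hc2 : 2 ≤ (S1 ∩ cutOf Ui).card)
    (h1 : (T2 ∩ cutOf Ui).card = 1) :
    ∃ e f : Sym2 V, e ∈ S1 ∧ e ∉ T2 ∧ f ∈ T2 ∧ f ∉ S1 ∧ e ∈ cutOf Ui ∧ f ∉ cutOf Ui ∧
      (∀ v ∈ f, v ∉ Ui) ∧
      IsSpanningTree (insert f (S1.erase e)) ∧
      IsSpanningTree (insert e (T2.erase f)) ∧
      InducedConn (insert f (S1.erase e)) Ui := by
  obtain ⟨f0, hf0⟩ := Finset.card_eq_one.1 h1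
  have hf0m : f0 ∈ T2 ∩ cutOf Ui := hf0 ▸ Finset.mem_singleton_self f0
  rw [Finset.mem_inter] at hf0m
  obtain ⟨a0, b0, hf0eq, ha0, hb0⟩ := cutOf_decomp hf0m.2
  -- generic inner reachability into erased graphs
  have hinner : ∀ (u' w' : V), u' ∈ Ui → w' ∉ Ui → ∀ {y : V}, y ∈ Ui →
      (SimpleGraph.fromEdgeSet (↑(S1.erase s(u', w')) : Set (Sym2 V))).Reachable s y := by
    intro u' w' hu' hw' y hy
    refine (inner_reach hconn hsUi hy).mono (SimpleGraph.fromEdgeSet_mono ?_)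
    refine Finset.coe_subset.2 ?_
    intro g hg
    rw [Finset.mem_filter] at hg
    refine Finset.mem_erase.2 ⟨?_, hg.1⟩
    intro hge
    exact hw' (hg.2 w' (hge ▸ Sym2.mem_mk_right u' w'))
  -- choose e₀ = s(u,w) with b0 reachable after erasing e₀
  have hex : ∃ u w : V, s(u, w) ∈ S1 ∧ s(u, w) ∈ cutOf Ui ∧ u ∈ Ui ∧ w ∉ Ui ∧
      (SimpleGraph.fromEdgeSet (↑(S1.erase s(u, w)) : Set (Sym2 V))).Reachable s b0 := by
    by_contra hcon
    push_neg at hcon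
    obtain ⟨e1, he1, e2, he2, h12⟩ := Finset.one_lt_card.1 hc2
    rw [Finset.mem_inter] at he1 he2
    obtain ⟨u1, w1, he1eq, hu1, hw1⟩ := cutOf_decomp he1.2
    obtain ⟨u2, w2, he2eq, hu2, hw2⟩ := cutOf_decomp he2.2
    subst he1eq; subst he2eq
    have hB2 : ¬ (SimpleGraph.fromEdgeSet (↑(S1.erase s(u2, w2)) : Set (Sym2 V))).Reachable s b0 :=
      hcon u2 w2 he2.1 he2.2 hu2 hw2
    have hout2 := LB_lemma hS1.2.1 hconn hsUi hu2 hw2 hB2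
    have hsub : S1.filter (fun g => ∀ v ∈ g, v ∉ Ui) ⊆ S1.erase s(u1, w1) := by
      intro g hg
      rw [Finset.mem_filter] at hg
      refine Finset.mem_erase.2 ⟨?_, hg.1⟩
      intro hge
      exact (hg.2 u1 (hge ▸ Sym2.mem_mk_left u1 w1)) hu1
    have r1 : (SimpleGraph.fromEdgeSet (↑(S1.erase s(u1, w1)) : Set (Sym2 V))).Reachable s w2 := by
      refine (hinner u1 w1 hu1 hw1 hu2).trans (SimpleGraph.Adj.reachable ?_)
      refine (SimpleGraph.fromEdgeSet_adj _).2
        ⟨Finset.mem_coe.2 (Finset.mem_erase.2 ⟨?_, he2.1⟩), fun h => hw2 (h ▸ hu2)⟩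
      exact fun h => h12 (h.symm ▸ rfl)
    have r2 : (SimpleGraph.fromEdgeSet (↑(S1.erase s(u1, w1)) : Set (Sym2 V))).Reachable s b0 :=
      r1.trans (hout2.mono (SimpleGraph.fromEdgeSet_mono (Finset.coe_subset.2 hsub)))
    exact hcon u1 w1 he1.1 he1.2 hu1 hw1 r2
  obtain ⟨u, w, heS, heC, huU, hwU, hb0reach⟩ := hex
  have huw : u ≠ w := fun h => hwU (h ▸ huU)
  have hBw : ¬ (SimpleGraph.fromEdgeSet (↑(S1.erase s(u, w)) : Set (Sym2 V))).Reachable s w := by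
    intro hr
    exact tree_not_reach_erase hV hS1 heS ((hinner u w huU hwU huU).symm.trans hr)
  -- crossing along a T2-path from u to w
  obtain ⟨p, q, hpB, hqB, hpq, rup, rqw⟩ :=
    crossing (P := fun x => ¬ (SimpleGraph.fromEdgeSet
        (↑(S1.erase s(u, w)) : Set (Sym2 V))).Reachable s x)
      (hT2.2.1.preconnected u w) (not_not_intro (hinner u w huU hwU huU)) hBw
  have hpR : (SimpleGraph.fromEdgeSet (↑(S1.erase s(u, w)) : Set (Sym2 V))).Reachable s p :=
    not_not.1 hpB
  have hfT : s(p, q) ∈ T2 := Finset.mem_coe.1 ((SimpleGraph.fromEdgeSet_adj _).1 hpq).1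
  have hpq_ne : p ≠ q := hpq.ne
  have hqU : q ∉ Ui := fun h => hqB (hinner u w huU hwU h)
  have hqb0 : q ≠ b0 := fun h => hqB (h ▸ hb0reach)
  have hqa0 : q ≠ a0 := fun h => hqU (h ▸ ha0)
  have hff0 : s(p, q) ≠ f0 := by
    rw [hf0eq]
    intro h
    rw [Sym2.eq_iff] at h
    rcases h with ⟨rfl, rfl⟩ | ⟨rfl, rfl⟩
    · exact hqb0 rfl
    · exact hqa0 rfl
  have hfC : s(p, q) ∉ cutOf Ui := by
    intro h
    exact hff0 (Finset.mem_singleton.1 (hf0 ▸ Finset.mem_inter.2 ⟨hfT, h⟩))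
  have hpU : p ∉ Ui := fun h => hfC (mem_cutOf_mk.2 (Or.inl ⟨h, hqU⟩))
  have hfS : s(p, q) ∉ S1 := by
    intro hfS1
    have hfe : s(p, q) ≠ s(u, w) := fun h => hfC (h ▸ heC)
    refine hqB (hpR.trans (SimpleGraph.Adj.reachable ?_))
    exact (SimpleGraph.fromEdgeSet_adj _).2
      ⟨Finset.mem_coe.2 (Finset.mem_erase.2 ⟨hfe, hfS1⟩), hpq_ne⟩
  have he0f0 : s(u, w) ≠ f0 := by
    rw [hf0eq]
    intro h
    rw [Sym2.eq_iff] at h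
    rcases h with ⟨rfl, rfl⟩ | ⟨rfl, rfl⟩
    · exact hBw hb0reach
    · exact hb0 huU
  have he0T : s(u, w) ∉ T2 := fun h =>
    he0f0 (Finset.mem_singleton.1 (hf0 ▸ Finset.mem_inter.2 ⟨h, heC⟩))
  have he0f : s(u, w) ≠ s(p, q) := fun h => hfC (h ▸ heC)
  have hqout := LB_lemma hS1.2.1 hconn hsUi huU hwU hqB
  -- the two exchange sets
  have houtsub : S1.filter (fun g => ∀ v ∈ g, v ∉ Ui) ⊆ S1.erase s(u, w) := by
    intro g hg
    rw [Finset.mem_filter] at hg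
    refine Finset.mem_erase.2 ⟨?_, hg.1⟩
    intro hge
    exact (hg.2 u (hge ▸ Sym2.mem_mk_left u w)) huU
  have herase_sub : S1.erase s(u, w) ⊆ insert s(p, q) (S1.erase s(u, w)) :=
    Finset.subset_insert _ _
  have hmono1 : (SimpleGraph.fromEdgeSet (↑(S1.erase s(u, w)) : Set (Sym2 V))) ≤
      SimpleGraph.fromEdgeSet (↑(insert s(p, q) (S1.erase s(u, w))) : Set (Sym2 V)) :=
    SimpleGraph.fromEdgeSet_mono (Finset.coe_subset.2 herase_sub)
  have hShconn : (SimpleGraph.fromEdgeSet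
      (↑(insert s(p, q) (S1.erase s(u, w))) : Set (Sym2 V))).Connected := by
    apply connected_transfer hS1.2.1
    intro x y hxy
    rw [SimpleGraph.fromEdgeSet_adj] at hxy
    by_cases hxe : s(x, y) = s(u, w)
    · have hmain : (SimpleGraph.fromEdgeSet
          (↑(insert s(p, q) (S1.erase s(u, w))) : Set (Sym2 V))).Reachable u w := by
        have h1r : (SimpleGraph.fromEdgeSet
            (↑(insert s(p, q) (S1.erase s(u, w))) : Set (Sym2 V))).Reachable u p :=
          ((hinner u w huU hwU huU).mono hmono1).symm.trans (hpR.mono hmono1)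
        have h2r : (SimpleGraph.fromEdgeSet
            (↑(insert s(p, q) (S1.erase s(u, w))) : Set (Sym2 V))).Adj p q :=
          (SimpleGraph.fromEdgeSet_adj _).2
            ⟨Finset.mem_coe.2 (Finset.mem_insert_self _ _), hpq_ne⟩
        have h3r : (SimpleGraph.fromEdgeSet
            (↑(insert s(p, q) (S1.erase s(u, w))) : Set (Sym2 V))).Reachable w q :=
          hqout.mono ((SimpleGraph.fromEdgeSet_mono (Finset.coe_subset.2 houtsub)).trans hmono1)
        exact (h1r.trans h2r.reachable).trans h3r.symm
      rw [Sym2.eq_iff] at hxe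
      rcases hxe with ⟨rfl, rfl⟩ | ⟨rfl, rfl⟩
      · exact hmain
      · exact hmain.symm
    · refine SimpleGraph.Adj.reachable ?_
      exact (SimpleGraph.fromEdgeSet_adj _).2
        ⟨Finset.mem_coe.2 (Finset.mem_insert.2 (Or.inr (Finset.mem_erase.2 ⟨hxe, hxy.1⟩))), hxy.2⟩
  have hThconn : (SimpleGraph.fromEdgeSet
      (↑(insert s(u, w) (T2.erase s(p, q))) : Set (Sym2 V))).Connected := by
    apply connected_transfer hT2.2.1
    have hmono2 : (SimpleGraph.fromEdgeSet (↑(T2.erase s(p, q)) : Set (Sym2 V))) ≤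
        SimpleGraph.fromEdgeSet (↑(insert s(u, w) (T2.erase s(p, q))) : Set (Sym2 V)) :=
      SimpleGraph.fromEdgeSet_mono (Finset.coe_subset.2 (Finset.subset_insert _ _))
    have rup' : (SimpleGraph.fromEdgeSet (↑(T2.erase s(p, q)) : Set (Sym2 V))).Reachable u p := by
      rw [fromEdgeSet_erase_eq]; exact rup
    have rqw' : (SimpleGraph.fromEdgeSet (↑(T2.erase s(p, q)) : Set (Sym2 V))).Reachable q w := by
      rw [fromEdgeSet_erase_eq]; exact rqw
    intro x y hxy
    rw [SimpleGraph.fromEdgeSet_adj] at hxy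
    by_cases hxe : s(x, y) = s(p, q)
    · have hmain : (SimpleGraph.fromEdgeSet
          (↑(insert s(u, w) (T2.erase s(p, q))) : Set (Sym2 V))).Reachable p q := by
        have hadj : (SimpleGraph.fromEdgeSet
            (↑(insert s(u, w) (T2.erase s(p, q))) : Set (Sym2 V))).Adj u w :=
          (SimpleGraph.fromEdgeSet_adj _).2
            ⟨Finset.mem_coe.2 (Finset.mem_insert_self _ _), huw⟩
        exact ((rup'.mono hmono2).symm.trans hadj.reachable).trans (rqw'.mono hmono2).symm
      rw [Sym2.eq_iff] at hxe
      rcases hxe with ⟨rfl, rfl⟩ | ⟨rfl, rfl⟩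
      · exact hmain
      · exact hmain.symm
    · refine SimpleGraph.Adj.reachable ?_
      exact (SimpleGraph.fromEdgeSet_adj _).2
        ⟨Finset.mem_coe.2 (Finset.mem_insert.2 (Or.inr (Finset.mem_erase.2 ⟨hxe, hxy.1⟩))), hxy.2⟩
  have hShtree : IsSpanningTree (insert s(p, q) (S1.erase s(u, w))) := by
    refine ⟨?_, hShconn, ?_⟩
    · intro g hg
      rcases Finset.mem_insert.1 hg with rfl | hg'
      · exact fun hd => hpq_ne (Sym2.mk_isDiag_iff.1 hd)
      · exact hS1.1 g (Finset.mem_of_mem_erase hg')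
    · rw [Finset.card_insert_of_notMem (fun h => hfS (Finset.mem_of_mem_erase h)),
        Finset.card_erase_of_mem heS]
      have hpos : 1 ≤ S1.card := Finset.card_pos.2 ⟨_, heS⟩
      have := hS1.2.2
      omega
  have hThtree : IsSpanningTree (insert s(u, w) (T2.erase s(p, q))) := by
    refine ⟨?_, hThconn, ?_⟩
    · intro g hg
      rcases Finset.mem_insert.1 hg with rfl | hg'
      · exact fun hd => huw (Sym2.mk_isDiag_iff.1 hd)
      · exact hT2.1 g (Finset.mem_of_mem_erase hg')
    · rw [Finset.card_insert_of_notMem (fun h => he0T (Finset.mem_of_mem_erase h)),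
        Finset.card_erase_of_mem hfT]
      have hpos : 1 ≤ T2.card := Finset.card_pos.2 ⟨_, hfT⟩
      have := hT2.2.2
      omega
  have hconn' : InducedConn (insert s(p, q) (S1.erase s(u, w))) Ui := by
    refine inducedConn_congr ?_ hconn
    intro a b ha hb
    constructor
    · intro hab
      rcases Finset.mem_insert.1 hab with heq | hab'
      · exfalso
        rw [Sym2.eq_iff] at heq
        rcases heq with ⟨rfl, rfl⟩ | ⟨rfl, rfl⟩
        · exact hpU ha
        · exact hpU hb
      · exact Finset.mem_of_mem_erase hab'
    · intro hab
      refine Finset.mem_insert.2 (Or.inr (Finset.mem_erase.2 ⟨?_, hab⟩))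
      intro heq
      rw [Sym2.eq_iff] at heq
      rcases heq with ⟨rfl, rfl⟩ | ⟨rfl, rfl⟩
      · exact hwU hb
      · exact hwU ha
  refine ⟨s(u, w), s(p, q), heS, he0T, hfT, hfS, heC, hfC, ?_, hShtree, hThtree, hconn'⟩
  intro v hv
  rcases Sym2.mem_iff.1 hv with rfl | rfl
  · exact hpU
  · exact hqU


theorem stmt9 {V : Type*} [Fintype V] [DecidableEq V]
    (hV : 2 ≤ Fintype.card V) (s t : V) (hst : s ≠ t)
    (xstar : Sym2 V → ℝ) (hfeas : LPFeasible s t xstar)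
    (r : ℕ) (hr : 1 ≤ r) (S : ℕ → Finset (Sym2 V))
    (hS : ∀ j ∈ Finset.Icc 1 r, IsSpanningTree (S j))
    (ε : ℝ) (hε : 0 ≤ ε)
    (hstar : StarProp s t xstar ε (fun e => (∑ j ∈ Finset.Icc 1 r, chi (S j) e) / (r : ℝ)))
    (ℓ : ℕ) (U : ℕ → Finset V)
    (hU0 : U 0 = {s}) (hUl : U ℓ = Finset.univ \ {t})
    (hUchain : ∀ i < ℓ, U i ⊂ U (i + 1))
    (hUnarrow : ∀ C : Finset (Sym2 V), IsNarrowCut xstar C ↔ ∃ i ≤ ℓ, C = cutOf (U i))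
    (i j : ℕ) (hi1 : 1 ≤ i) (hiℓ : i + 1 ≤ ℓ) (hj1 : 1 ≤ j) (hjr : j ≤ r)
    (hjθi : (j : ℤ) ≤ theta r xstar ε U i)
    (hconn : InducedConn (S j) (U i))
    (hprev : ∀ h < i, (j : ℤ) ≤ theta r xstar ε U h → (S j ∩ cutOf (U h)).card = 1) :
    ∃ Shat : ℕ → Finset (Sym2 V),
      (∀ j' ∈ Finset.Icc 1 r, IsSpanningTree (Shat j')) ∧
      (∀ e : Sym2 V,
        (∑ j' ∈ Finset.Icc 1 r, chi (S j') e) / (r : ℝ) =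
          (∑ j' ∈ Finset.Icc 1 r, chi (Shat j') e) / (r : ℝ)) ∧
      (∀ j' < j, Shat j' = S j') ∧
      (∀ h ≤ i, (j : ℤ) ≤ theta r xstar ε U h → (Shat j ∩ cutOf (U h)).card = 1) := by
  classical
  have hiuse : i ≤ ℓ := le_trans (Nat.le_succ i) hiℓ
  have Umono : ∀ a b : ℕ, a ≤ b → b ≤ ℓ → U a ⊆ U b := by
    intro a b hab hbl
    induction b with
    | zero =>
      have : a = 0 := Nat.le_zero.1 hab
      subst this; exact subset_rfl
    | succ n ihn =>
      rcases Nat.eq_or_lt_of_le hab with rfl | hlt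
      · exact subset_rfl
      · exact (ihn (Nat.lt_succ_iff.1 hlt) (le_trans (Nat.le_succ n) hbl)).trans
          (hUchain n (Nat.lt_of_succ_le hbl)).subset
  have hsmem : ∀ h : ℕ, h ≤ ℓ → s ∈ U h := fun h hh =>
    Umono 0 h (Nat.zero_le h) hh (hU0 ▸ Finset.mem_singleton_self s)
  have htnot : ∀ h : ℕ, h ≤ ℓ → t ∉ U h := by
    intro h hh ht
    have := Umono h ℓ hh le_rfl ht
    rw [hUl] at this
    simp at this
  have hUne : ∀ h : ℕ, h ≤ ℓ → (U h).Nonempty := fun h hh => ⟨s, hsmem h hh⟩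
  have hUproper : ∀ h : ℕ, h ≤ ℓ → U h ≠ Finset.univ := fun h hh heq =>
    htnot h hh (heq ▸ Finset.mem_univ t)
  have hrR : (0:ℝ) < (r:ℝ) := by exact_mod_cast hr
  suffices H : ∀ (c : ℕ) (S' : ℕ → Finset (Sym2 V)),
      (∀ j' ∈ Finset.Icc 1 r, IsSpanningTree (S' j')) →
      (∀ e : Sym2 V, (∑ j' ∈ Finset.Icc 1 r, chi (S' j') e) = ∑ j' ∈ Finset.Icc 1 r, chi (S j') e) →
      (∀ j' < j, S' j' = S j') →
      InducedConn (S' j) (U i) →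
      (∀ h < i, (j : ℤ) ≤ theta r xstar ε U h → (S' j ∩ cutOf (U h)).card = 1) →
      (S' j ∩ cutOf (U i)).card ≤ c →
      ∃ Shat : ℕ → Finset (Sym2 V),
        (∀ j' ∈ Finset.Icc 1 r, IsSpanningTree (Shat j')) ∧
        (∀ e : Sym2 V, (∑ j' ∈ Finset.Icc 1 r, chi (S j') e) / (r : ℝ) =
            (∑ j' ∈ Finset.Icc 1 r, chi (Shat j') e) / (r : ℝ)) ∧
        (∀ j' < j, Shat j' = S j') ∧
        (∀ h ≤ i, (j : ℤ) ≤ theta r xstar ε U h → (Shat j ∩ cutOf (U h)).card = 1) by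
    exact H ((S j ∩ cutOf (U i)).card) S hS (fun _ => rfl) (fun _ _ => rfl) hconn hprev le_rfl
  intro c
  induction c with
  | zero =>
    intro S' h1 h2 h3 h4 h5 h6
    exfalso
    have hjIcc : j ∈ Finset.Icc 1 r := Finset.mem_Icc.2 ⟨hj1, hjr⟩
    have hne := tree_cross (h1 j hjIcc) (hUne i hiuse) (hUproper i hiuse)
    rw [Finset.card_eq_zero.1 (Nat.le_zero.1 h6)] at hne
    exact Finset.not_nonempty_empty hne
  | succ c ih =>
    intro S' h1 h2 h3 h4 h5 h6
    by_cases hle : (S' j ∩ cutOf (U i)).card ≤ c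
    · exact ih S' h1 h2 h3 h4 h5 hle
    have hcard : (S' j ∩ cutOf (U i)).card = c + 1 := le_antisymm h6 (not_le.1 hle)
    by_cases hc1 : (S' j ∩ cutOf (U i)).card = 1
    · refine ⟨S', h1, fun e => by rw [h2 e], h3, ?_⟩
      intro h hh hθ
      rcases Nat.lt_or_ge h i with hlt | hge
      · exact h5 h hlt hθ
      · have heqi : h = i := le_antisymm hh hge
        rw [heqi]
        exact hc1
    have hc2 : 2 ≤ (S' j ∩ cutOf (U i)).card := by omega
    have hjIcc : j ∈ Finset.Icc 1 r := Finset.mem_Icc.2 ⟨hj1, hjr⟩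
    have hsum_le : ∑ j' ∈ Finset.Icc 1 r, ((S' j' ∩ cutOf (U i)).card : ℝ) ≤
        (r : ℝ) * (xval xstar (cutOf (U i)) + ε) := by
      have hx := (hstar.2.2 (cutOf (U i))).2
      have hswap : ∑ j' ∈ Finset.Icc 1 r, ((S' j' ∩ cutOf (U i)).card : ℝ)
          = (r:ℝ) * xval (fun e => (∑ j' ∈ Finset.Icc 1 r, chi (S j') e) / (r : ℝ))
              (cutOf (U i)) := by
        unfold xval
        rw [Finset.mul_sum]
        have lhs1 : ∑ j' ∈ Finset.Icc 1 r, ((S' j' ∩ cutOf (U i)).card : ℝ)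
            = ∑ j' ∈ Finset.Icc 1 r, ∑ e ∈ cutOf (U i), chi (S' j') e :=
          Finset.sum_congr rfl (fun j' _ => (chi_sum _ _).symm)
        rw [lhs1, Finset.sum_comm]
        refine Finset.sum_congr rfl (fun e _ => ?_)
        rw [← h2 e, mul_comm, div_mul_cancel₀ _ (ne_of_gt hrR)]
      rw [hswap]
      exact mul_le_mul_of_nonneg_left hx (le_of_lt hrR)
    set A := (Finset.Icc 1 r).filter (fun j' => (S' j' ∩ cutOf (U i)).card = 1) with hA
    have hjA : (j : ℤ) ≤ (A.card : ℤ) := by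
      have hsplit := Finset.sum_filter_add_sum_filter_not (Finset.Icc 1 r)
        (fun j' => (S' j' ∩ cutOf (U i)).card = 1) (fun j' => ((S' j' ∩ cutOf (U i)).card : ℝ))
      have hones : ∑ j' ∈ A, ((S' j' ∩ cutOf (U i)).card : ℝ) = (A.card : ℝ) := by
        have hval : ∀ j' ∈ A, ((S' j' ∩ cutOf (U i)).card : ℝ) = 1 := fun j' hj' => by
          rw [(Finset.mem_filter.1 hj').2]; norm_num
        rw [Finset.sum_congr rfl hval, Finset.sum_const, nsmul_eq_mul, mul_one]
      have htwos := Finset.card_nsmul_le_sum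
        ((Finset.Icc 1 r).filter (fun j' => ¬ (S' j' ∩ cutOf (U i)).card = 1))
        (fun j' => ((S' j' ∩ cutOf (U i)).card : ℝ)) (2:ℝ) ?hbound
      case hbound =>
        intro x hx
        obtain ⟨hxI, hxne⟩ := Finset.mem_filter.1 hx
        have hpos : 0 < (S' x ∩ cutOf (U i)).card :=
          Finset.card_pos.2 (tree_cross (h1 x hxI) (hUne i hiuse) (hUproper i hiuse))
        have h2le : 2 ≤ (S' x ∩ cutOf (U i)).card := by omega
        show (2:ℝ) ≤ ((S' x ∩ cutOf (U i)).card : ℝ)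
        exact_mod_cast h2le
      rw [nsmul_eq_mul] at htwos
      have hcards : A.card +
          ((Finset.Icc 1 r).filter (fun j' => ¬ (S' j' ∩ cutOf (U i)).card = 1)).card = r := by
        rw [hA, Finset.card_filter_add_card_filter_not, Nat.card_Icc]
        omega
      have hcardsR : (A.card : ℝ) +
          (((Finset.Icc 1 r).filter (fun j' => ¬ (S' j' ∩ cutOf (U i)).card = 1)).card : ℝ)
          = (r : ℝ) := by exact_mod_cast hcards
      have hreal : (r:ℝ) * (2 - xval xstar (cutOf (U i)) - ε) ≤ (A.card : ℝ) := by
        nlinarith [hsplit, hones, htwos, hsum_le, hcardsR]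
      have hθle : theta r xstar ε U i ≤ (A.card : ℤ) := by
        unfold theta
        exact Int.ceil_le.2 (by exact_mod_cast hreal)
      exact le_trans hjθi hθle
    have hjA' : j ≤ A.card := by exact_mod_cast hjA
    have hpartner : ∃ j'' ∈ A, j < j'' := by
      by_contra hcon
      push_neg at hcon
      have hjnA : j ∉ A := fun hj => hc1 (Finset.mem_filter.1 hj).2
      have hsubA : A ⊆ Finset.Ico 1 j := by
        intro x hx
        have hx1 := (Finset.mem_Icc.1 (Finset.mem_filter.1 hx).1).1
        have hx2 := hcon x hx
        have hx3 : x ≠ j := fun h => hjnA (h ▸ hx)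
        exact Finset.mem_Ico.2 ⟨hx1, lt_of_le_of_ne hx2 hx3⟩
      have := Finset.card_le_card hsubA
      rw [Nat.card_Ico] at this
      omega
    obtain ⟨j'', hj''A, hjj''⟩ := hpartner
    have hj''Icc : j'' ∈ Finset.Icc 1 r := (Finset.mem_filter.1 hj''A).1
    have hj''1 : (S' j'' ∩ cutOf (U i)).card = 1 := (Finset.mem_filter.1 hj''A).2
    obtain ⟨e₀, f, he₀S, he₀T, hfT, hfS, he₀C, hfC, hfout, hShtree, hThtree, hconn''⟩ :=
      step hV (hsmem i hiuse) (h1 j hjIcc) (h1 j'' hj''Icc) h4 hc2 hj''1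
    have hef : e₀ ≠ f := fun h => hfC (h ▸ he₀C)
    have hjne : j ≠ j'' := ne_of_lt hjj''
    set Sh := insert f ((S' j).erase e₀) with hSh
    set Th := insert e₀ ((S' j'').erase f) with hTh
    set S'' : ℕ → Finset (Sym2 V) :=
      fun k => if k = j then Sh else if k = j'' then Th else S' k with hS''def
    have hS''j : S'' j = Sh := by simp [hS''def]
    have hS''j'' : S'' j'' = Th := by simp [hS''def, hjne.symm]
    have hS''other : ∀ k, k ≠ j → k ≠ j'' → S'' k = S' k := by
      intro k hk1 hk2
      simp [hS''def, hk1, hk2]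
    apply ih S''
    · intro k hk
      by_cases hk1 : k = j
      · rw [hk1, hS''j]; exact hShtree
      by_cases hk2 : k = j''
      · rw [hk2, hS''j'']; exact hThtree
      · rw [hS''other k hk1 hk2]; exact h1 k hk
    · intro e
      rw [← h2 e]
      have hjm' : j ∈ (Finset.Icc 1 r).erase j'' := Finset.mem_erase.2 ⟨hjne, hjIcc⟩
      rw [← Finset.add_sum_erase _ (fun k => chi (S'' k) e) hj''Icc,
        ← Finset.add_sum_erase _ (fun k => chi (S' k) e) hj''Icc,
        ← Finset.add_sum_erase _ (fun k => chi (S'' k) e) hjm',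
        ← Finset.add_sum_erase _ (fun k => chi (S' k) e) hjm']
      have hrest : ∑ k ∈ ((Finset.Icc 1 r).erase j'').erase j, chi (S'' k) e
          = ∑ k ∈ ((Finset.Icc 1 r).erase j'').erase j, chi (S' k) e := by
        refine Finset.sum_congr rfl (fun k hk => ?_)
        obtain ⟨hk1, hk2⟩ := Finset.mem_erase.1 hk
        rw [hS''other k hk1 (Finset.mem_erase.1 hk2).1]
      rw [hS''j, hS''j'', hrest]
      have hpair : chi Th e + chi Sh e = chi (S' j'') e + chi (S' j) e := by
        by_cases he : e = e₀
        · subst he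
          have c1 : chi Th e = 1 := by simp [chi, hTh]
          have c2 : chi Sh e = 0 := by simp [chi, hSh, hef]
          have c3 : chi (S' j'') e = 0 := by simp [chi, he₀T]
          have c4 : chi (S' j) e = 1 := by simp [chi, he₀S]
          rw [c1, c2, c3, c4]; ring
        by_cases hf : e = f
        · subst hf
          have c1 : chi Th e = 0 := by simp [chi, hTh, Ne.symm hef]
          have c2 : chi Sh e = 1 := by simp [chi, hSh]
          have c3 : chi (S' j'') e = 1 := by simp [chi, hfT]
          have c4 : chi (S' j) e = 0 := by simp [chi, hfS]
          rw [c1, c2, c3, c4]; ring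
        · have m1 : e ∈ Th ↔ e ∈ S' j'' := by
            rw [hTh]; simp [Finset.mem_insert, Finset.mem_erase, he, hf]
          have m2 : e ∈ Sh ↔ e ∈ S' j := by
            rw [hSh]; simp [Finset.mem_insert, Finset.mem_erase, he, hf]
          have c1 : chi Th e = chi (S' j'') e := by simp only [chi]; rw [if_congr m1 rfl rfl]
          have c2 : chi Sh e = chi (S' j) e := by simp only [chi]; rw [if_congr m2 rfl rfl]
          rw [c1, c2]
      linarith [hpair]
    · intro k hkj
      rw [hS''other k (ne_of_lt hkj) (ne_of_lt (lt_trans hkj hjj''))]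
      exact h3 k hkj
    · rw [hS''j]; exact hconn''
    · intro h hh hθ
      rw [hS''j]
      have hUh_sub : U h ⊆ U i := Umono h i (le_of_lt hh) hiuse
      have hhl : h ≤ ℓ := le_trans (le_of_lt hh) hiuse
      have hfCh : f ∉ cutOf (U h) := by
        intro hf
        obtain ⟨a, b, heq, haU, hbU⟩ := cutOf_decomp hf
        exact hfout a (heq ▸ Sym2.mem_mk_left a b) (hUh_sub haU)
      by_cases he₀Ch : e₀ ∈ cutOf (U h)
      · exfalso
        have hold : S' j ∩ cutOf (U h) = {e₀} := by
          obtain ⟨g, hg⟩ := Finset.card_eq_one.1 (h5 h hh hθ)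
          have hmem : e₀ ∈ S' j ∩ cutOf (U h) := Finset.mem_inter.2 ⟨he₀S, he₀Ch⟩
          rw [hg] at hmem
          rw [hg, Finset.mem_singleton.1 hmem]
        have hempty : Sh ∩ cutOf (U h) = ∅ := by
          ext g
          simp only [Finset.mem_inter, hSh, Finset.mem_insert, Finset.mem_erase,
            Finset.notMem_empty, iff_false, not_and]
          rintro (rfl | ⟨hne, hgS⟩) hgC
          · exact hfCh hgC
          · exact hne (Finset.mem_singleton.1 (hold ▸ Finset.mem_inter.2 ⟨hgS, hgC⟩))
        have hne2 := tree_cross hShtree (hUne h hhl) (hUproper h hhl)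
        rw [hempty] at hne2
        exact Finset.not_nonempty_empty hne2
      · have heq2 : Sh ∩ cutOf (U h) = S' j ∩ cutOf (U h) := by
          ext g
          simp only [Finset.mem_inter, hSh, Finset.mem_insert, Finset.mem_erase]
          constructor
          · rintro ⟨rfl | ⟨hne, hgS⟩, hgC⟩
            · exact absurd hgC hfCh
            · exact ⟨hgS, hgC⟩
          · rintro ⟨hgS, hgC⟩
            exact ⟨Or.inr ⟨fun h' => he₀Ch (h' ▸ hgC), hgS⟩, hgC⟩
        rw [heq2]
        exact h5 h hh hθ
    · rw [hS''j]
      have heq3 : Sh ∩ cutOf (U i) = (S' j ∩ cutOf (U i)).erase e₀ := by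
        ext g
        simp only [Finset.mem_inter, hSh, Finset.mem_insert, Finset.mem_erase]
        constructor
        · rintro ⟨rfl | ⟨hne, hgS⟩, hgC⟩
          · exact absurd hgC hfC
          · exact ⟨hne, hgS, hgC⟩
        · rintro ⟨hne, hgS, hgC⟩
          exact ⟨Or.inr ⟨hne, hgS⟩, hgC⟩
      rw [heq3, Finset.card_erase_of_mem (Finset.mem_inter.2 ⟨he₀S, he₀C⟩), hcard]
      omega

end STT

end
end
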